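/- Let E be a Banach space and {T_u : u ∈ ℝ₊^d} a strongly continuous semigroup of linear contractions of E with T_0 = id. Fix t₀ > 0, y ∈ E, and set x = t₀^{−d} ∫_{[0,t₀]^d} T_u(y) du. Then for all 0 < v₁,…,v_d ≤ v < t₀ with v = max vᵢ, writing 𝐯 = (v₁,…,v_d), one has ‖T_𝐯(x) − x‖ ≤ 2 (t₀^d − (t₀ − v)^d) t₀^{−d} ‖y‖. -/

import Mathlib

/-!
Translating by `𝐯` moves the average of `T_u y` over the cube `[0, t₀]^d` to the average over
the shifted cube `𝐯 + [0, t₀]^d`. Both cubes contain `[𝐯, t₀]`, so in the difference of the two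
integrals only the parts outside `[𝐯, t₀]` survive; each has volume `t₀^d - ∏ (t₀ - vᵢ)`, at most
`t₀^d - (t₀ - v)^d`, and the integrand is bounded by `‖y‖` since the `T_u` are contractions.
-/

open MeasureTheory Set

section

variable {E : Type*} [NormedAddCommGroup E]

theorem ContinuousOn.integrableOn_Icc_of_nonneg {ι : Type*} [Fintype ι] {f : (ι → ℝ) → E}
    (hf : ContinuousOn f {u | 0 ≤ u}) {a : ι → ℝ} (ha : 0 ≤ a) (b : ι → ℝ) :
    IntegrableOn f (Icc a b) :=
  (hf.mono fun _ hu => ha.trans hu.1).integrableOn_compact isCompact_Icc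

variable [NormedSpace ℝ E]

theorem setIntegral_Icc_comp_add_left {G : Type*} [AddCommGroup G] [PartialOrder G]
    [IsOrderedAddMonoid G] [MeasurableSpace G] [MeasurableAdd G] {μ : Measure G}
    [μ.IsAddLeftInvariant] (f : G → E) (w a b : G) :
    ∫ u in Icc a b, f (w + u) ∂μ = ∫ u in Icc (w + a) (w + b), f u ∂μ := by
  have hpre : (w + ·) ⁻¹' Icc (w + a) (w + b) = Icc a b := by simp [preimage_const_add_Icc]
  rw [← hpre, (measurePreserving_add_left μ w).setIntegral_preimage_emb
    (measurableEmbedding_addLeft w)]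

theorem norm_setIntegral_sub_setIntegral_le {X : Type*} [MeasurableSpace X] {μ : Measure X}
    {f : X → E} {s t c : Set X} (hcs : c ⊆ s) (hct : c ⊆ t) (hc : MeasurableSet c)
    (hfs : IntegrableOn f s μ) (hft : IntegrableOn f t μ) (hs : μ s < ⊤) (ht : μ t < ⊤)
    {C : ℝ} (hC : ∀ x ∈ s ∪ t, ‖f x‖ ≤ C) :
    ‖∫ x in s, f x ∂μ - ∫ x in t, f x ∂μ‖ ≤ C * ((μ (s \ c)).toReal + (μ (t \ c)).toReal) := by
  have hcancel : ∫ x in s, f x ∂μ - ∫ x in t, f x ∂μ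
      = ∫ x in s \ c, f x ∂μ - ∫ x in t \ c, f x ∂μ := by
    rw [setIntegral_sdiff hc hfs hcs, setIntegral_sdiff hc hft hct]
    abel
  have hs' : ‖∫ x in s \ c, f x ∂μ‖ ≤ C * (μ (s \ c)).toReal :=
    norm_setIntegral_le_of_norm_le_const ((measure_mono sdiff_subset).trans_lt hs)
      fun x hx => hC x (Or.inl hx.1)
  have ht' : ‖∫ x in t \ c, f x ∂μ‖ ≤ C * (μ (t \ c)).toReal :=
    norm_setIntegral_le_of_norm_le_const ((measure_mono sdiff_subset).trans_lt ht)
      fun x hx => hC x (Or.inr hx.1)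
  rw [hcancel, mul_add]
  exact (norm_sub_le _ _).trans (add_le_add hs' ht')

theorem volume_Icc_diff_Icc_toReal {ι : Type*} [Fintype ι] {a b c d : ι → ℝ}
    (hac : a ≤ c) (hcd : c ≤ d) (hdb : d ≤ b) :
    (volume (Icc a b \ Icc c d)).toReal = ∏ i, (b i - a i) - ∏ i, (d i - c i) := by
  have hsub : Icc c d ⊆ Icc a b := Icc_subset_Icc hac hdb
  rw [measure_sdiff hsub measurableSet_Icc.nullMeasurableSet isCompact_Icc.measure_ne_top,
    ENNReal.toReal_sub_of_le (measure_mono hsub) isCompact_Icc.measure_ne_top,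
    Real.volume_Icc_pi_toReal (hac.trans (hcd.trans hdb)), Real.volume_Icc_pi_toReal hcd]

theorem semigroup_apply_setIntegral_Icc [CompleteSpace E] {ι : Type*} [Fintype ι]
    {T : (ι → ℝ) → E →L[ℝ] E}
    (hsemi : ∀ u v : ι → ℝ, 0 ≤ u → 0 ≤ v → T (u + v) = (T u).comp (T v))
    (hcont : ∀ z : E, ContinuousOn (fun u => T u z) {u : ι → ℝ | 0 ≤ u})
    {w : ι → ℝ} (hw : 0 ≤ w) (a : ι → ℝ) (y : E) :
    T w (∫ u in Icc 0 a, T u y) = ∫ u in Icc w (w + a), T u y := by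
  have hshift : ∀ u ∈ Icc 0 a, T w (T u y) = T (w + u) y := fun u hu => by
    rw [hsemi w u hw hu.1, ContinuousLinearMap.comp_apply]
  rw [← (T w).integral_comp_comm ((hcont y).integrableOn_Icc_of_nonneg le_rfl a),
    setIntegral_congr_fun measurableSet_Icc hshift,
    setIntegral_Icc_comp_add_left (fun u => T u y), add_zero]

end

theorem shift_of_average_estimate_general
    {E : Type*} [NormedAddCommGroup E] [NormedSpace ℝ E] [CompleteSpace E]
    (d : ℕ)
    (T : (Fin d → ℝ) → (E →L[ℝ] E))
    (hsemi : ∀ u v : Fin d → ℝ, 0 ≤ u → 0 ≤ v → T (u + v) = (T u).comp (T v))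
    (hcontr : ∀ u : Fin d → ℝ, 0 ≤ u → ‖T u‖ ≤ 1)
    (hcont : ∀ z : E, ContinuousOn (fun u => T u z) {u : Fin d → ℝ | 0 ≤ u})
    (t₀ : ℝ) (ht₀ : 0 < t₀) (y : E)
    (x : E) (hx : x = (t₀ ^ d)⁻¹ • ∫ u in Set.Icc (0 : Fin d → ℝ) (fun _ => t₀), T u y)
    (w : Fin d → ℝ) (v : ℝ) (hw : ∀ i, 0 < w i ∧ w i ≤ v)
    (hv : v < t₀) :
    ‖T w x - x‖ ≤ 2 * (t₀ ^ d - (t₀ - v) ^ d) / t₀ ^ d * ‖y‖ := by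
  set c : Fin d → ℝ := fun _ => t₀
  have hw0 : 0 ≤ w := fun i => (hw i).1.le
  have hwc : w ≤ c := fun i => (hw i).2.trans hv.le
  have hbound : ∀ u ∈ Icc w (w + c) ∪ Icc 0 c, ‖T u y‖ ≤ ‖y‖ := fun u hu =>
    have hu0 : 0 ≤ u := hu.elim (fun hu => hw0.trans hu.1) (·.1)
    ((T u).le_of_opNorm_le (hcontr u hu0) y).trans_eq (one_mul _)
  have hvol_shifted : (volume (Icc w (w + c) \ Icc w c)).toReal = t₀ ^ d - ∏ i, (t₀ - w i) := by
    simp [volume_Icc_diff_Icc_toReal le_rfl hwc (le_add_of_nonneg_left hw0), c]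
  have hvol : (volume (Icc 0 c \ Icc w c)).toReal = t₀ ^ d - ∏ i, (t₀ - w i) := by
    simp [volume_Icc_diff_Icc_toReal hw0 hwc le_rfl, c]
  have hprod : (t₀ - v) ^ d ≤ ∏ i, (t₀ - w i) := by
    simpa using Finset.prod_le_prod (s := Finset.univ) (fun i _ => sub_nonneg.2 hv.le)
      fun i _ => sub_le_sub_left (hw i).2 t₀
  have hdiff : T w x - x
      = (t₀ ^ d)⁻¹ • ((∫ u in Icc w (w + c), T u y) - ∫ u in Icc 0 c, T u y) := by
    rw [hx, map_smul, semigroup_apply_setIntegral_Icc hsemi hcont hw0, smul_sub]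
  have hcancel := norm_setIntegral_sub_setIntegral_le
    (Icc_subset_Icc_right (le_add_of_nonneg_left hw0)) (Icc_subset_Icc hw0 le_rfl)
    measurableSet_Icc ((hcont y).integrableOn_Icc_of_nonneg hw0 _)
    ((hcont y).integrableOn_Icc_of_nonneg le_rfl _)
    isCompact_Icc.measure_lt_top isCompact_Icc.measure_lt_top hbound
  rw [hvol_shifted, hvol] at hcancel
  calc ‖T w x - x‖
      ≤ (t₀ ^ d)⁻¹ * (‖y‖ * (t₀ ^ d - ∏ i, (t₀ - w i) + (t₀ ^ d - ∏ i, (t₀ - w i)))) := by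
        rw [hdiff, norm_smul, Real.norm_of_nonneg (by positivity)]
        gcongr
    _ = 2 * (t₀ ^ d - ∏ i, (t₀ - w i)) / t₀ ^ d * ‖y‖ := by ring
    _ ≤ 2 * (t₀ ^ d - (t₀ - v) ^ d) / t₀ ^ d * ‖y‖ := by gcongr

/-- Key estimate in Lemma 3.1: with `x = t₀^{-d} ∫_{[0,t₀]^d} T_u y du`, for
`0 < vᵢ ≤ v < t₀` one has `‖T_𝐯 x − x‖ ≤ 2 (t₀^d − (t₀−v)^d) t₀^{-d} ‖y‖`. -/
theorem shift_of_average_estimate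
    {E : Type*} [NormedAddCommGroup E] [NormedSpace ℝ E] [CompleteSpace E]
    (d : ℕ) (hd : 1 ≤ d)
    (T : (Fin d → ℝ) → (E →L[ℝ] E))
    (hsemi : ∀ u v : Fin d → ℝ, 0 ≤ u → 0 ≤ v → T (u + v) = (T u).comp (T v))
    (hid : T 0 = ContinuousLinearMap.id ℝ E)
    (hcontr : ∀ u : Fin d → ℝ, 0 ≤ u → ‖T u‖ ≤ 1)
    (hcont : ∀ z : E, ContinuousOn (fun u => T u z) {u : Fin d → ℝ | 0 ≤ u})
    (t₀ : ℝ) (ht₀ : 0 < t₀) (y : E)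
    (x : E) (hx : x = (t₀ ^ d)⁻¹ • ∫ u in Set.Icc (0 : Fin d → ℝ) (fun _ => t₀), T u y)
    (w : Fin d → ℝ) (v : ℝ) (hw : ∀ i, 0 < w i ∧ w i ≤ v)
    (hv : v < t₀) (hmax : ∃ i, w i = v) :
    ‖T w x - x‖ ≤ 2 * (t₀ ^ d - (t₀ - v) ^ d) / t₀ ^ d * ‖y‖ :=
  shift_of_average_estimate_general d T hsemi hcontr hcont t₀ ht₀ y x hx w v hw hv
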